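/- arXiv:2412.04439 — 6 statements merged into one kernel-verified Lean document; each statement's English description precedes it below -/
import Mathlib

section
/- Let ν > 0 and f(s) = s²/(s² + ν(1-s)²). Define s_Y = (1/2)·√(2ν/(ν+1)) and s_Y' = (ν + √(2ν(ν+1)))/(2(ν+2)). Let ν = μ_αβ/μ_γ, D(s) = s²/μ_αβ + (1-s)²/μ_γ and λ_a(s) = 2s/(μ_αβ·D(s)). If 0 < s_Y < s_Y' ≤ 1, then f'(s_Y) equals the shock speed σ(s_Y; s_Y') = (f(s_Y') - f(s_Y))/(s_Y' - s_Y), and this common value also equals λ_a(s_Y'); that is, (s_Y, s_Y') is a fast double contact pair. -/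
set_option maxHeartbeats 1000000 in
theorem stmt_2 (ν μab μγ : ℝ) (hab : 0 < μab) (hγ : 0 < μγ) (hν : 0 < ν)
    (hratio : ν = μab / μγ)
    (f : ℝ → ℝ) (hf : ∀ s, f s = s^2 / (s^2 + ν * (1 - s)^2))
    (D : ℝ → ℝ) (hD : ∀ s, D s = s^2 / μab + (1 - s)^2 / μγ)
    (sY sY' : ℝ)
    (hsY : sY = (1/2) * Real.sqrt (2*ν/(ν+1)))
    (hsY' : sY' = (ν + Real.sqrt (2*ν*(ν+1))) / (2*(ν+2)))
    (h0 : 0 < sY) (h1 : sY < sY') (h2 : sY' ≤ 1) :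
    deriv f sY = (f sY' - f sY) / (sY' - sY) ∧
    (f sY' - f sY) / (sY' - sY) = 2 * sY' / (μab * D sY') := by
  have hν1 : (0:ℝ) < ν + 1 := by linarith
  set r : ℝ := Real.sqrt (2*ν/(ν+1)) with hrdef
  have hr0 : 0 ≤ r := Real.sqrt_nonneg _
  have hr2 : r^2 = 2*ν/(ν+1) := Real.sq_sqrt (by positivity)
  have hrpos : 0 < r := by rw [hsY] at h0; linarith
  have hrlt : r^2 < 2 := by
    rw [hr2, div_lt_iff₀ hν1]; nlinarith
  have hnu_eq : ν = r^2/(2-r^2) := by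
    rw [hr2]; field_simp; ring
  have hsq : Real.sqrt (2*ν*(ν+1)) = (ν+1)*r := by
    rw [show 2*ν*(ν+1) = ((ν+1)*r)^2 by rw [mul_pow, hr2]; field_simp,
      Real.sqrt_sq (by positivity)]
  clear_value r
  -- basic nonvanishing facts about r
  have hrne : r ≠ 0 := ne_of_gt hrpos
  have hrlt' : r < 3/2 := by nlinarith
  have h2r : (2:ℝ) - r^2 ≠ 0 := by nlinarith
  have h2r' : (2:ℝ) - r ≠ 0 := by nlinarith
  have h3r : (3:ℝ) - 2*r ≠ 0 := by nlinarith
  have h4r : (4:ℝ) - r^2 ≠ 0 := by nlinarith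
  have h8r : (8:ℝ) - r^2*2 ≠ 0 := by nlinarith
  rw [hsq] at hsY'
  have hrel : r^2*(ν+1) = 2*ν := by
    rw [hr2]; field_simp
  have hν2 : (0:ℝ) < ν + 2 := by linarith
  -- closed form for sY'
  have hkey' : sY' * (2*(2-r)) = r := by
    rw [hsY', div_mul_eq_mul_div, div_eq_iff (by positivity : (2:ℝ)*(ν+2) ≠ 0)]
    linear_combination (-2)*hrel
  have hsY'2 : sY' = r / (2*(2-r)) := by
    rw [eq_div_iff (mul_ne_zero two_ne_zero h2r')]
    exact hkey'
  have hsY2 : sY = 1/2 * r := hsY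
  -- g values
  have hgY : sY^2 + ν*(1-sY)^2 = r^2*(3-2*r)/(2*(2-r^2)) := by
    rw [eq_div_iff (mul_ne_zero two_ne_zero h2r), hsY2]
    linear_combination (-(2-r)^2/2) * hrel
  have hgY' : sY'^2 + ν*(1-sY')^2 = r^2*(3-2*r)^2/(2*(2-r)^2*(2-r^2)) := by
    rw [eq_div_iff (by exact mul_ne_zero (mul_ne_zero two_ne_zero (pow_ne_zero 2 h2r')) h2r)]
    linear_combination (-(4-3*r)^2/2) * hrel +
      ((sY'*(4-2*r)+r - ν*(2*(4-3*r) - (sY'*(4-2*r)-r)))*(2-r^2)/2) * hkey'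
  -- f values
  have hfY : f sY = (2-r^2)/(2*(3-2*r)) := by
    rw [hf, hgY, hsY2, div_div_eq_mul_div,
      div_eq_div_iff (mul_ne_zero (pow_ne_zero 2 hrne) h3r) (mul_ne_zero two_ne_zero h3r)]
    ring
  have hfY' : f sY' = (2-r^2)/(2*(3-2*r)^2) := by
    rw [hf, hgY', div_div_eq_mul_div,
      div_eq_div_iff (mul_ne_zero (pow_ne_zero 2 hrne) (pow_ne_zero 2 h3r))
        (mul_ne_zero two_ne_zero (pow_ne_zero 2 h3r))]
    linear_combination ((sY'*(2*(2-r))+r)*(2-r^2)*(3-2*r)^2) * hkey'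
  -- difference
  have hdiff : sY' - sY = r*(r-1)/(2*(2-r)) := by
    rw [hsY'2, hsY2]; field_simp; ring
  have hsub : sY' - sY ≠ 0 := by
    intro h; rw [h] at hdiff; linarith [h1, sub_ne_zero_of_ne (ne_of_gt h1)]
  have hr1 : r - 1 ≠ 0 := by
    intro h
    apply sub_ne_zero_of_ne (ne_of_gt h1)
    have : sY' - sY = 0 := by rw [hdiff, h]; simp
    linarith [this]
  -- derivative
  have hg1 : sY^2 + ν*(1-sY)^2 ≠ 0 := by
    rw [hgY]
    positivity
  have hfe : f = fun s => s^2 / (s^2 + ν * (1 - s)^2) := funext hf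
  have hd1 : HasDerivAt (fun s:ℝ => s^2) (2*sY) sY := by
    simpa using hasDerivAt_pow 2 sY
  have hd2 : HasDerivAt (fun s:ℝ => (1-s)^2) (-(2*(1-sY))) sY := by
    have := ((hasDerivAt_id sY).const_sub 1).pow 2
    simpa [Pi.pow_def] using this
  have hden : HasDerivAt (fun s:ℝ => s^2 + ν*(1-s)^2) (2*sY + ν*(-(2*(1-sY)))) sY :=
    hd1.add (hd2.const_mul ν)
  have hdf : HasDerivAt f ((2*sY*(sY^2 + ν*(1-sY)^2) - sY^2*(2*sY + ν*(-(2*(1-sY)))))/(sY^2 + ν*(1-sY)^2)^2) sY := by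
    rw [hfe]; exact hd1.div hden hg1
  have hderiv : deriv f sY = 2*(2-r)*(2-r^2)/(r*(3-2*r)^2) := by
    rw [hdf.deriv, hgY, hsY2, hnu_eq]
    field_simp
    ring
  -- μab * D sY'
  have hμD : μab * D sY' = r^2*(3-2*r)^2/(2*(2-r)^2*(2-r^2)) := by
    have : μab * D sY' = sY'^2 + ν*(1-sY')^2 := by
      rw [hD, hratio]; field_simp
    rw [this, hgY']
  constructor
  · rw [hderiv, hfY, hfY', hdiff]
    field_simp
    ring
  · rw [hfY, hfY', hdiff, hμD, hsY'2]
    field_simp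
    ring
end

section
/- Let ν > 0. The quadratic equation s²ν + s² - 2sν + ν = 0 in s has negative discriminant, namely 4ν² - 4(1+ν)ν = -4ν < 0, and hence has no real solutions. Consequently, there do not exist two distinct states s_M, s_N ∈ (s_U, 1] (both on the same side of the umbilic point s_U = ν/(1+ν)) forming a fast double contact pair, i.e., satisfying σ(s_M; s_N) = λ_f(s_M) = λ_f(s_N). -/
theorem stmt_4 (ν : ℝ) (hν : 0 < ν)
    (f : ℝ → ℝ) (hf : ∀ s, f s = s^2 / (s^2 + ν * (1 - s)^2))
    (lamf : ℝ → ℝ)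
    (hlamf : ∀ s, lamf s = max (2*s / (s^2 + ν*(1-s)^2)) (deriv f s))
    (sU : ℝ) (hsU : sU = ν / (1 + ν)) :
    (4*ν^2 - 4*(1+ν)*ν = -4*ν ∧ -4*ν < 0) ∧
    (¬ ∃ s : ℝ, s^2*ν + s^2 - 2*s*ν + ν = 0) ∧
    ¬ ∃ sM sN : ℝ, sU < sM ∧ sM ≤ 1 ∧ sU < sN ∧ sN ≤ 1 ∧ sM ≠ sN ∧
      (f sN - f sM) / (sN - sM) = lamf sM ∧ lamf sM = lamf sN := by
  have hg : ∀ s : ℝ, 0 < s^2 + ν*(1-s)^2 := by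
    intro s
    rcases eq_or_ne s 0 with h | h
    · subst h; nlinarith
    · have : 0 < s^2 := by positivity
      nlinarith [sq_nonneg (1-s)]
  -- derivative of f
  have hderiv : ∀ s : ℝ, deriv f s = 2*ν*s*(1-s) / (s^2 + ν*(1-s)^2)^2 := by
    intro s
    have hfe : f = fun s => s^2 / (s^2 + ν * (1 - s)^2) := funext hf
    have h1 : HasDerivAt (fun s : ℝ => s^2) (2*s) s := by
      simpa using (hasDerivAt_pow 2 s)
    have h3 : HasDerivAt (fun s : ℝ => ν*(1-s)^2) (ν*(2*(1-s)*(-1))) s := by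
      have h0 : HasDerivAt (fun s : ℝ => (1-s)^2) (2*(1-s)^1*(-1)) s := by
        have := ((hasDerivAt_id s).const_sub 1).fun_pow 2
        simpa using this
      have := h0.const_mul ν
      simpa [mul_comm, mul_assoc, mul_left_comm] using this
    have h2 : HasDerivAt (fun s : ℝ => s^2 + ν*(1-s)^2) (2*s - 2*ν*(1-s)) s := by
      have := h1.fun_add h3
      convert this using 1
      · rfl
      · rfl
      · ring
    have hd : HasDerivAt f
        ((2*s*(s^2 + ν*(1-s)^2) - s^2*(2*s - 2*ν*(1-s))) / (s^2 + ν*(1-s)^2)^2) s := by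
      rw [hfe]
      exact h1.div h2 (ne_of_gt (hg s))
    rw [hd.deriv]
    congr 1
    ring
  -- on (sU, 1], lamf s = 2s/g s
  have hlam : ∀ s : ℝ, sU < s → lamf s = 2*s / (s^2 + ν*(1-s)^2) := by
    intro s hs
    have hν' : 0 < 1 + ν := by linarith
    have hsU0 : 0 < sU := by rw [hsU]; positivity
    have hs0 : 0 < s := lt_trans hsU0 hs
    have hkey : s * (1+ν) - ν > 0 := by
      have : ν / (1+ν) < s := hsU ▸ hs
      rw [div_lt_iff₀ hν'] at this
      nlinarith
    have hle : deriv f s ≤ 2*s / (s^2 + ν*(1-s)^2) := by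
      rw [hderiv s]
      rw [div_le_div_iff₀ (by positivity) (hg s)]
      have hgs := hg s
      nlinarith [mul_pos (mul_pos hs0 hgs) (mul_pos hs0 hkey)]
    rw [hlamf s, max_eq_left hle]
  refine ⟨⟨by ring, by linarith⟩, ?_, ?_⟩
  · rintro ⟨s, hs⟩
    nlinarith [sq_nonneg ((1+ν)*s - ν)]
  · rintro ⟨sM, sN, hM1, hM2, hN1, hN2, hne, hσ, heq⟩
    have hgM := hg sM
    have hgN := hg sN
    have hsU0 : 0 < sU := by rw [hsU]; positivity
    have hM0 : 0 < sM := lt_trans hsU0 hM1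
    have hN0 : 0 < sN := lt_trans hsU0 hN1
    rw [hlam sM hM1, hlam sN hN1] at heq
    rw [hlam sM hM1, hf sM, hf sN] at hσ
    have hsub : sN - sM ≠ 0 := sub_ne_zero.mpr (Ne.symm hne)
    -- eq1 : sM * gN = sN * gM
    have eq1 : sM * (sN^2 + ν*(1-sN)^2) = sN * (sM^2 + ν*(1-sM)^2) := by
      field_simp at heq
      linarith [heq]
    have eq2 : (sN^2 * (sM^2 + ν*(1-sM)^2) - sM^2 * (sN^2 + ν*(1-sN)^2)) =
        (sN - sM) * (2*sM) * (sN^2 + ν*(1-sN)^2) := by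
      rw [div_eq_div_iff hsub (ne_of_gt hgM)] at hσ
      field_simp at hσ ⊢
      nlinarith [hσ]
    have key : sN * (sM^2 + ν*(1-sM)^2) * (sN - sM) = 0 := by
      linear_combination (-1 : ℝ) * eq2 - (2*sN - sM) * eq1
    have : sN * (sM^2 + ν*(1-sM)^2) * (sN - sM) ≠ 0 := by
      apply mul_ne_zero (mul_ne_zero (ne_of_gt hN0) (ne_of_gt hgM)) hsub
    exact this key
end

section
/- Let ν > 1, s_U = ν/(1+ν), s_Y = (1/2)·√(2ν/(ν+1)), and let s_I be the unique root in [0,1] of P(s) = 2s³ - 3s² + s_U. Then P(s_Y) = (s_U/2)·(√(2·s_U) - 1) > 0 and consequently s_Y < s_I < s_U. -/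
/-!
The cubic `P c s = 2 s³ - 3 s² + c` has derivative `6 s (s - 1) ≤ 0`, so it is antitone on `[0, 1]`.
Writing `s_Y = r / 2` with `r² = 2 s_U`, the relation `r² = 2 s_U` collapses `P(s_Y)` to
`(s_U / 2)(r - 1)`, positive because `s_U > 1/2`. Since moreover `P(s_U) = s_U (2 s_U - 1)(s_U - 1) < 0`,
the sign pattern `P(s_Y) > 0 = P(s_I) > P(s_U)` and antitonicity give `s_Y < s_I < s_U`.
-/

open Real Set

lemma cubic_antitoneOn_Icc (c : ℝ) :
    AntitoneOn (fun s : ℝ => 2 * s ^ 3 - 3 * s ^ 2 + c) (Icc 0 1) := by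
  rintro x ⟨hx0, -⟩ y ⟨-, hy1⟩ hxy
  nlinarith [mul_nonneg (sub_nonneg.2 hxy) (mul_nonneg hx0 (sub_nonneg.2 hy1)),
    mul_nonneg (sub_nonneg.2 hxy) (mul_nonneg (hx0.trans hxy) (sub_nonneg.2 hy1)),
    mul_nonneg (sub_nonneg.2 hxy) (mul_nonneg hx0 (sub_nonneg.2 (hxy.trans hy1)))]

lemma cubic_half_sqrt_two_mul {c : ℝ} (hc : 0 ≤ c) :
    2 * (√(2 * c) / 2) ^ 3 - 3 * (√(2 * c) / 2) ^ 2 + c = c / 2 * (√(2 * c) - 1) := by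
  linear_combination (√(2 * c) / 4 - 3 / 4) * sq_sqrt (by linarith : 0 ≤ 2 * c)

lemma cubic_self_neg {c : ℝ} (hc : 1 / 2 < c) (hc1 : c < 1) : 2 * c ^ 3 - 3 * c ^ 2 + c < 0 := by
  have hfactor : 2 * c ^ 3 - 3 * c ^ 2 + c = c * (2 * c - 1) * (c - 1) := by ring
  rw [hfactor]
  exact mul_neg_of_pos_of_neg (by nlinarith) (by linarith)

lemma div_one_add_mem_Ioo {ν : ℝ} (hν : 1 < ν) : ν / (1 + ν) ∈ Ioo (1 / 2) 1 := by
  have hpos : (0 : ℝ) < 1 + ν := by linarith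
  constructor
  · rw [lt_div_iff₀ hpos]; linarith
  · rw [div_lt_one hpos]; linarith

theorem stmt_6 (ν : ℝ) (hν : 1 < ν)
    (sU sY sI : ℝ)
    (hsU : sU = ν / (1 + ν))
    (hsY : sY = (1/2) * Real.sqrt (2*ν/(ν+1)))
    (P : ℝ → ℝ) (hP : ∀ s, P s = 2*s^3 - 3*s^2 + sU)
    (hI : sI ∈ Set.Icc (0:ℝ) 1) (hIroot : P sI = 0) :
    P sY = (sU/2) * (Real.sqrt (2*sU) - 1) ∧ 0 < P sY ∧ sY < sI ∧ sI < sU := by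
  obtain rfl : P = fun s => 2 * s ^ 3 - 3 * s ^ 2 + sU := funext hP
  obtain ⟨hU_half, hU_one⟩ : sU ∈ Ioo (1 / 2) 1 := hsU ▸ div_one_add_mem_Ioo hν
  have hY : sY = √(2 * sU) / 2 := by
    rw [hsY, hsU, add_comm ν 1, mul_div_assoc]; ring
  have hr_one : 1 < √(2 * sU) := (lt_sqrt zero_le_one).2 (by linarith)
  have hr_two : √(2 * sU) < 2 := (sqrt_lt' two_pos).2 (by linarith)
  have hY_mem : sY ∈ Icc 0 1 := by rw [hY]; constructor <;> linarith [sqrt_nonneg (2 * sU)]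
  have hU_mem : sU ∈ Icc 0 1 := ⟨by linarith, hU_one.le⟩
  have hval : 2 * sY ^ 3 - 3 * sY ^ 2 + sU = sU / 2 * (√(2 * sU) - 1) :=
    hY ▸ cubic_half_sqrt_two_mul (by linarith)
  have hpos : 0 < sU / 2 * (√(2 * sU) - 1) := mul_pos (by linarith) (by linarith)
  refine ⟨hval, hpos.trans_eq hval.symm, ?_, ?_⟩
  · exact (cubic_antitoneOn_Icc sU).reflect_lt hI hY_mem (by simp only [hIroot, hval, hpos])
  · exact (cubic_antitoneOn_Icc sU).reflect_lt hU_mem hI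
      (by simpa only [hIroot] using cubic_self_neg hU_half hU_one)
end

section
/- Let ν > 0, f(s) = s²/(s²+ν(1-s)²), s_U = ν/(1+ν). Define s_{B₂} = (√(ν+1) - 1)/√(ν+1) and s_{B₁} = ν/(2+ν). Then s_{B₂} and s_{B₁} satisfy the Rankine-Hugoniot identity with right state s = 1 at shock speeds equal to the fast characteristic speed of s_{B₂} and the slow characteristic speed of s_{B₁}, respectively; that is, f'(s_{B₂}) = (f(1) - f(s_{B₂}))/(1 - s_{B₂}) when s_{B₂} < s_U, and λ_a(s_{B₁}) = (f(1) - f(s_{B₁}))/(1 - s_{B₁}), where λ_a(s) = 2s/((ν+1)·(s²/ν + (1-s)²)·ν/(ν+1)). Moreover s_{B₂} < s_{B₁} < s_U whenever ν > 1. -/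
theorem stmt_10 (ν : ℝ) (hν : 0 < ν)
    (f : ℝ → ℝ) (hf : ∀ s, f s = s^2 / (s^2 + ν * (1 - s)^2))
    (lamA : ℝ → ℝ) (hlamA : ∀ s, lamA s = 2*s / (s^2 + ν*(1-s)^2))
    (sU sB1 sB2 : ℝ)
    (hsU : sU = ν / (1 + ν))
    (hsB2 : sB2 = (Real.sqrt (ν+1) - 1) / Real.sqrt (ν+1))
    (hsB1 : sB1 = ν / (2 + ν)) :
    (sB2 < sU → deriv f sB2 = (f 1 - f sB2) / (1 - sB2)) ∧
    lamA sB1 = (f 1 - f sB1) / (1 - sB1) ∧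
    (1 < ν → sB2 < sB1 ∧ sB1 < sU) := by
  have hD : ∀ s : ℝ, 0 < s^2 + ν*(1-s)^2 := fun s => by
    nlinarith [sq_nonneg (s - ν*(1-s)), sq_nonneg s, sq_nonneg (1-s)]
  have hfeq : f = fun s => s^2 / (s^2 + ν*(1-s)^2) := by
    funext s; rw [hf]
  have hr0 : (0:ℝ) < Real.sqrt (ν+1) := Real.sqrt_pos.mpr (by linarith)
  have hr : Real.sqrt (ν+1) ^ 2 = ν + 1 := Real.sq_sqrt (by linarith)
  set r := Real.sqrt (ν+1) with hrdef
  have hr1 : 1 < r := by nlinarith [hr, hr0]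
  have hsB2pos : 0 < sB2 := by
    rw [hsB2]; exact div_pos (by linarith) hr0
  have hsB2lt1 : sB2 < 1 := by
    rw [hsB2, div_lt_one hr0]; linarith
  have hkey2 : sB2^2 + ν*(1-sB2)^2 = 2*sB2 := by
    rw [hsB2]; field_simp; nlinarith [hr]
  have hf1 : f 1 = 1 := by rw [hf]; norm_num
  refine ⟨fun _ => ?_, ?_, fun hν1 => ⟨?_, ?_⟩⟩
  · -- derivative computation
    have h1 : HasDerivAt (fun s:ℝ => s^2) (2*sB2) sB2 := by
      simpa using hasDerivAt_pow 2 sB2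
    have ha : HasDerivAt (fun s:ℝ => (1-s)) (-1) sB2 := by
      simpa using (hasDerivAt_id sB2).const_sub 1
    have hb := (ha.pow 2).const_mul ν
    have h2 : HasDerivAt (fun s:ℝ => s^2 + ν*(1-s)^2) (2*sB2 - 2*ν*(1-sB2)) sB2 := by
      convert h1.add hb using 1
      case e'_8 => funext s; rfl
      case e'_9 => push_cast; ring
      all_goals rfl
    have hdiv := h1.div h2 (ne_of_gt (hD sB2))
    have hderiv : deriv f sB2 =
        (2*sB2 * (sB2^2 + ν*(1-sB2)^2) - sB2^2 * (2*sB2 - 2*ν*(1-sB2))) /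
          (sB2^2 + ν*(1-sB2)^2)^2 := by
      rw [hfeq]; exact hdiv.deriv
    rw [hderiv, hf1, hf sB2, hkey2]
    have hs0 : sB2 ≠ 0 := ne_of_gt hsB2pos
    have hs1 : (1:ℝ) - sB2 ≠ 0 := by linarith
    have hnu : ν*(1-sB2)^2 = 2*sB2 - sB2^2 := by linarith [hkey2]
    field_simp
    linear_combination hnu
  · -- slow family RH identity
    have hsB1lt1 : sB1 < 1 := by
      rw [hsB1, div_lt_one (by linarith)]; linarith
    have hkey1 : ν*(1-sB1) = 2*sB1 := by
      rw [hsB1]; field_simp; ring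
    rw [hlamA, hf1, hf sB1]
    have hDne : sB1^2 + ν*(1-sB1)^2 ≠ 0 := ne_of_gt (hD sB1)
    have hs1 : (1:ℝ) - sB1 ≠ 0 := by linarith
    rw [div_eq_div_iff hDne hs1]
    field_simp
    linear_combination (sB1 - 1) * hkey1
  · -- sB2 < sB1
    rw [hsB2, hsB1, div_lt_div_iff₀ hr0 (by linarith)]
    nlinarith [mul_pos (sub_pos.mpr hr1) (sub_pos.mpr hr1), hr]
  · -- sB1 < sU
    rw [hsB1, hsU, div_lt_div_iff₀ (by linarith) (by linarith)]
    nlinarith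
end

section
/- Let ν > 1, s_U = ν/(1+ν), and for s_M ∈ (s_U, 1) consider the quadratic 2·s_M·x² - s_U·(2s_M+1)·x + s_U·s_M = 0, whose two roots are x = (s_U·(2s_M+1) ± √(s_U²·(2s_M+1)² - 8·s_M²·s_U))/(4·s_M). Whenever the discriminant s_U²(2s_M+1)² - 8 s_M² s_U is nonnegative, both roots are positive, and the larger root is strictly less than s_U. -/
theorem stmt_18 (ν : ℝ) (hν : 1 < ν)
    (sU : ℝ) (hsU : sU = ν/(1+ν))
    (sM : ℝ) (hM : sU < sM) (hM1 : sM < 1)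
    (hdisc : 0 ≤ sU^2*(2*sM+1)^2 - 8*sM^2*sU)
    (xp xm : ℝ)
    (hxp : xp = (sU*(2*sM+1) + Real.sqrt (sU^2*(2*sM+1)^2 - 8*sM^2*sU)) / (4*sM))
    (hxm : xm = (sU*(2*sM+1) - Real.sqrt (sU^2*(2*sM+1)^2 - 8*sM^2*sU)) / (4*sM)) :
    2*sM*xp^2 - sU*(2*sM+1)*xp + sU*sM = 0 ∧
    2*sM*xm^2 - sU*(2*sM+1)*xm + sU*sM = 0 ∧
    0 < xm ∧ 0 < xp ∧ xp < sU := by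
  have h1ν : (0:ℝ) < 1 + ν := by linarith
  have hsUhalf : 1/2 < sU := by
    rw [hsU, lt_div_iff₀ h1ν]; linarith
  have hsUpos : 0 < sU := by linarith
  have hsMpos : 0 < sM := by linarith
  have hsMne : sM ≠ 0 := ne_of_gt hsMpos
  set s := Real.sqrt (sU^2*(2*sM+1)^2 - 8*sM^2*sU) with hsdef
  have hs0 : 0 ≤ s := Real.sqrt_nonneg _
  have hs2 : s^2 = sU^2*(2*sM+1)^2 - 8*sM^2*sU := Real.sq_sqrt hdisc
  have hb : 0 < sU*(2*sM+1) := by nlinarith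
  have hslt : s < sU*(2*sM+1) := by
    apply lt_of_pow_lt_pow_left₀ 2 (le_of_lt hb)
    nlinarith
  have hslt2 : s < sU*(2*sM-1) := by
    apply lt_of_pow_lt_pow_left₀ 2 (by nlinarith)
    nlinarith [hs2, mul_pos (mul_pos hsMpos hsUpos) (sub_pos.mpr hM)]
  refine ⟨?_, ?_, ?_, ?_, ?_⟩
  · rw [hxp]; field_simp; nlinarith [hs2]
  · rw [hxm]; field_simp; nlinarith [hs2]
  · rw [hxm]; apply div_pos (by linarith) (by linarith)
  · rw [hxp]; positivity
  · rw [hxp, div_lt_iff₀ (by linarith : (0:ℝ) < 4*sM)]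
    have h4 : sU*(2*sM+1) + sU*(2*sM-1) = sU*(4*sM) := by ring
    linarith
end

section
/- Let ν > 1 and define r = √(2ν/(ν+1)). Then 0 < r < 2 and r·(r-1)² > 0, so r > r²·(2 - r); dividing by the positive quantity 2(2-r), s_Y' := -r/(2(r-2)) = r/(2(2-r)) satisfies s_Y' > r²/2. Equivalently, s_Y' = (ν + √(2ν(ν+1)))/(2(ν+2)) > ν/(ν+1) = s_U, and s_Y := r/2 = (1/2)√(2ν/(ν+1)) < s_U. -/
theorem stmt_19 (ν : ℝ) (hν : 1 < ν)
    (r sU sY sY' : ℝ)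
    (hr : r = Real.sqrt (2*ν/(ν+1)))
    (hsU : sU = ν/(ν+1))
    (hsY : sY = r/2)
    (hsY' : sY' = (ν + Real.sqrt (2*ν*(ν+1))) / (2*(ν+2))) :
    0 < r ∧ r < 2 ∧ 0 < r*(r-1)^2 ∧ r^2*(2-r) < r ∧
    sY' = r / (2*(2-r)) ∧ sU < sY' ∧ sY < sU := by
  have hν1 : (0:ℝ) < ν + 1 := by linarith
  have ha : (0:ℝ) ≤ 2*ν/(ν+1) := by positivity
  have hr0 : 0 ≤ r := hr ▸ Real.sqrt_nonneg _
  have hr2 : r^2 = 2*ν/(ν+1) := by rw [hr, Real.sq_sqrt ha]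
  have hr2' : r^2 * (ν+1) = 2*ν := by
    field_simp [hr2]
    rw [hr2, div_mul_cancel₀ _ hν1.ne']; ring
  have h1r : 1 < r := by
    by_contra h; push_neg at h
    have h2 : r^2 ≤ 1 := by nlinarith
    nlinarith
  have hrlt : r < 2 := by
    by_contra h; push_neg at h
    have h2 : 4 ≤ r^2 := by nlinarith
    nlinarith
  have hkey : 0 < r*(r-1)^2 := mul_pos (by linarith) (pow_pos (by linarith) 2)
  have hsq : Real.sqrt (2*ν*(ν+1)) = (ν+1)*r := by
    rw [show (2*ν*(ν+1)) = ((ν+1)*r)^2 by ring_nf; nlinarith,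
      Real.sqrt_sq (by positivity)]
  have h2r : (0:ℝ) < 2 - r := by linarith
  refine ⟨by linarith, hrlt, hkey, by nlinarith [hkey], ?_, ?_, ?_⟩
  · rw [hsY', hsq]
    rw [div_eq_div_iff (by positivity) (by positivity)]
    nlinarith
  · rw [hsU, hsY', hsq, div_lt_div_iff₀ (by positivity) (by positivity)]
    nlinarith [sq_nonneg (ν - 1), sq_nonneg ((3*ν+1)*r - 4*ν), sq_nonneg (r-1)]
  · rw [hsY, hsU, div_lt_div_iff₀ (by norm_num) hν1]
    nlinarith
end
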